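/- (Kálmán's coefficient lemma) Let x be an element of the Hecke algebra H_n, and expand x in the positive basis as x = Σ_{w∈S_n} a_w T_w and in the negative basis as x = Σ_{w∈S_n} b_w U_w, where U_w = (T_{w^{-1}})^{-1} and a_w, b_w ∈ Z[z,z^{-1}]. Then the coefficients of the longest element agree: a_δ = b_δ. -/

import Mathlib

open Equiv LaurentPolynomial

noncomputable section

/-- The base ring `ℤ[z, z⁻¹]` of Laurent polynomials in the skein variable `z`. -/
abbrev R : Type := LaurentPolynomial ℤ

/-- The skein variable `z ∈ ℤ[z, z⁻¹]`. -/
def z : R := LaurentPolynomial.T 1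

/-- The Coxeter length of a permutation, computed as its number of inversions. -/
def invCount {n : ℕ} (w : Equiv.Perm (Fin n)) : ℕ :=
  (Finset.univ.filter fun p : Fin n × Fin n => p.1 < p.2 ∧ w p.2 < w p.1).card

/-- `s` is an adjacent transposition (simple reflection) `sᵢ = (i, i+1)`. -/
def IsAdjSwap {n : ℕ} (s : Equiv.Perm (Fin n)) : Prop :=
  ∃ i j : Fin n, (j : ℕ) = (i : ℕ) + 1 ∧ s = Equiv.swap i j

/-! The negative basis is unitriangular with respect to the positive one when permutations are
ordered by length: `U_w - T_w` lies in the span of the `T_v` with `ℓ(v) < ℓ(w)`. By induction on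
`ℓ(w)`, write `w = u s` with `s` a simple reflection and `ℓ(u) < ℓ(w)`; then `U_w = U_u U_s` with
`U_s = T_s - z`, and right multiplication by `T_s` raises the length filtration by at most one,
since `T_v T_s` is `T_{vs}` or `z T_v + T_{vs}`. As `δ` has maximal length, the `T_δ`-coordinate
of `U_w` is therefore that of `T_w`, so both expansions of `x` have the same `δ`-coefficient. -/

section Inversions

open Finset

variable {n : ℕ}

def inversions (w : Perm (Fin n)) : Finset (Fin n × Fin n) :=
  univ.filter fun p => p.1 < p.2 ∧ w p.2 < w p.1

lemma mem_inversions {w : Perm (Fin n)} {p : Fin n × Fin n} :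
    p ∈ inversions w ↔ p.1 < p.2 ∧ w p.2 < w p.1 := by
  simp [inversions]

lemma invCount_eq_card_inversions (w : Perm (Fin n)) : invCount w = #(inversions w) := rfl

lemma invCount_one : invCount (1 : Perm (Fin n)) = 0 := by
  simp only [invCount_eq_card_inversions, card_eq_zero, eq_empty_iff_forall_notMem,
    mem_inversions]
  exact fun p h => h.1.asymm h.2

lemma invCount_inv (w : Perm (Fin n)) : invCount w⁻¹ = invCount w :=
  card_nbij' (fun p => (w⁻¹ p.2, w⁻¹ p.1)) (fun p => (w p.2, w p.1))
    (fun p hp => by simp_all) (fun p hp => by simp_all) (fun p _ => by simp) (fun p _ => by simp)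

lemma invCount_le_invCount_revPerm (w : Perm (Fin n)) :
    invCount w ≤ invCount (Fin.revPerm : Perm (Fin n)) :=
  card_le_card fun p hp => by simp_all [Fin.rev_lt_rev]

lemma swap_lt_swap_iff_of_adj {i j p q : Fin n} (hij : (j : ℕ) = i + 1)
    (h₁ : (p, q) ≠ (i, j)) (h₂ : (p, q) ≠ (j, i)) : swap i j p < swap i j q ↔ p < q := by
  simp only [swap_apply_def, Fin.lt_def, ne_eq, Prod.mk.injEq, Fin.ext_iff] at *
  split_ifs <;> omega

lemma inversions_mul_swap_of_lt {u : Perm (Fin n)} {i j : Fin n} (hij : (j : ℕ) = i + 1)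
    (h : u i < u j) :
    inversions (u * swap i j) =
      insert (i, j) ((inversions u).map ((swap i j).prodCongr (swap i j)).toEmbedding) := by
  have hlt : i < j := Fin.lt_def.2 (by omega)
  ext ⟨p, q⟩
  simp only [mem_inversions, mem_insert, mem_map_equiv, prodCongr_symm, symm_swap,
    prodCongr_apply, Prod.map, Perm.mul_apply]
  by_cases h₁ : (p, q) = (i, j)
  · simp_all
  by_cases h₂ : (p, q) = (j, i)
  · simp_all [hlt.asymm, h.le]
  rw [swap_lt_swap_iff_of_adj hij h₁ h₂]
  simp [h₁]

lemma invCount_mul_swap_of_lt {u : Perm (Fin n)} {i j : Fin n} (hij : (j : ℕ) = i + 1)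
    (h : u i < u j) : invCount (u * swap i j) = invCount u + 1 := by
  have hlt : i < j := Fin.lt_def.2 (by omega)
  rw [invCount_eq_card_inversions, inversions_mul_swap_of_lt hij h, card_insert_of_notMem,
    card_map, invCount_eq_card_inversions]
  simp [mem_map_equiv, mem_inversions, hlt.asymm]

lemma invCount_mul_swap_of_gt {u : Perm (Fin n)} {i j : Fin n} (hij : (j : ℕ) = i + 1)
    (h : u j < u i) : invCount (u * swap i j) + 1 = invCount u := by
  simpa [mul_assoc] using (invCount_mul_swap_of_lt (u := u * swap i j) hij (by simpa using h)).symm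

lemma invCount_swap {i j : Fin n} (hij : (j : ℕ) = i + 1) : invCount (swap i j) = 1 := by
  simpa [invCount_one] using invCount_mul_swap_of_lt (u := 1) hij (Fin.lt_def.2 (by simp; omega))

lemma exists_adj_descent {w : Perm (Fin n)} (hw : w ≠ 1) :
    ∃ i j : Fin n, (j : ℕ) = i + 1 ∧ w j < w i := by
  contrapose! hw
  obtain _ | m := n
  · exact Subsingleton.elim _ _
  have hmono : Monotone w := Fin.monotone_iff_le_succ.2 fun k => hw _ _ (by simp)
  exact Equiv.ext (congrFun (hmono.strictMono_of_injective w.injective).eq_id)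

end Inversions

section Hecke

variable {n : ℕ} {k A : Type*} [CommRing k] [Ring A] [Algebra k A]

structure IsHeckeBasis (c : k) (B : Module.Basis (Perm (Fin n)) k A) : Prop where
  one : B 1 = 1
  mul : ∀ u v, invCount (u * v) = invCount u + invCount v → B (u * v) = B u * B v
  sq : ∀ s, IsAdjSwap s → B s ^ 2 = c • B s + 1

def spanInvCountLT (B : Module.Basis (Perm (Fin n)) k A) (N : ℕ) : Submodule k A :=
  Submodule.span k (B '' {v | invCount v < N})

variable {c : k} {B : Module.Basis (Perm (Fin n)) k A} {i j : Fin n}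

lemma basis_mem_spanInvCountLT {v : Perm (Fin n)} {N : ℕ} (h : invCount v < N) :
    B v ∈ spanInvCountLT B N :=
  Submodule.subset_span ⟨v, h, rfl⟩

lemma spanInvCountLT_mono : Monotone (spanInvCountLT B) := fun _ _ hN =>
  Submodule.span_mono (Set.image_mono fun _ hv => lt_of_lt_of_le hv hN)

namespace IsHeckeBasis

lemma mul_swap_of_lt (hB : IsHeckeBasis c B) (hij : (j : ℕ) = i + 1) {v : Perm (Fin n)}
    (h : v i < v j) : B v * B (swap i j) = B (v * swap i j) :=
  (hB.mul v _ (by rw [invCount_mul_swap_of_lt hij h, invCount_swap hij])).symm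

lemma mul_swap_of_gt (hB : IsHeckeBasis c B) (hij : (j : ℕ) = i + 1) {v : Perm (Fin n)}
    (h : v j < v i) : B v * B (swap i j) = c • B v + B (v * swap i j) := by
  have hv : B v = B (v * swap i j) * B (swap i j) := by
    have := hB.mul (v * swap i j) (swap i j)
      (by rw [mul_assoc, swap_mul_self, mul_one, invCount_swap hij, invCount_mul_swap_of_gt hij h])
    rwa [mul_assoc, swap_mul_self, mul_one] at this
  rw [hv, mul_assoc, ← pow_two, hB.sq _ ⟨i, j, hij, rfl⟩, mul_add, mul_one, mul_smul_comm, ← hv]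

lemma mul_swap_mem_spanInvCountLT (hB : IsHeckeBasis c B) (hij : (j : ℕ) = i + 1) {N : ℕ}
    {y : A} (hy : y ∈ spanInvCountLT B N) : y * B (swap i j) ∈ spanInvCountLT B (N + 1) := by
  suffices spanInvCountLT B N ≤
      (spanInvCountLT B (N + 1)).comap (LinearMap.mulRight k (B (swap i j))) from this hy
  refine Submodule.span_le.2 ?_
  rintro _ ⟨v, hv, rfl⟩
  simp only [Set.mem_ofPred_eq] at hv
  rw [SetLike.mem_coe, Submodule.mem_comap, LinearMap.mulRight_apply]
  rcases lt_or_gt_of_ne (v.injective.ne (Fin.ne_of_lt (Fin.lt_def.2 (by omega)) : i ≠ j))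
    with h | h
  · rw [hB.mul_swap_of_lt hij h]
    exact basis_mem_spanInvCountLT (by rw [invCount_mul_swap_of_lt hij h]; omega)
  · rw [hB.mul_swap_of_gt hij h]
    have := invCount_mul_swap_of_gt hij h
    exact add_mem (Submodule.smul_mem _ _ (basis_mem_spanInvCountLT (by omega)))
      (basis_mem_spanInvCountLT (by omega))

variable {U : Perm (Fin n) → A}

lemma negBasis_swap_eq (hB : IsHeckeBasis c B) (hU : ∀ w, U w * B w⁻¹ = 1 ∧ B w⁻¹ * U w = 1)
    (hij : (j : ℕ) = i + 1) : U (swap i j) = B (swap i j) - c • 1 :=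
  left_inv_eq_right_inv (by simpa using (hU (swap i j)).1) (by
    rw [mul_sub, ← pow_two, hB.sq _ ⟨i, j, hij, rfl⟩, mul_smul_comm, mul_one, add_sub_cancel_left])

lemma negBasis_mul_swap_eq (hB : IsHeckeBasis c B) (hU : ∀ w, U w * B w⁻¹ = 1 ∧ B w⁻¹ * U w = 1)
    (hij : (j : ℕ) = i + 1) {u : Perm (Fin n)} (h : u i < u j) :
    U (u * swap i j) = U u * U (swap i j) := by
  have hBinv : B (u * swap i j)⁻¹ = B (swap i j) * B u⁻¹ := by
    rw [mul_inv_rev, swap_inv]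
    refine hB.mul _ _ ?_
    rw [show swap i j * u⁻¹ = (u * swap i j)⁻¹ by rw [mul_inv_rev, swap_inv], invCount_inv,
      invCount_inv, invCount_mul_swap_of_lt hij h, invCount_swap hij, add_comm]
  have hs := (hU (swap i j)).2
  rw [swap_inv] at hs
  refine left_inv_eq_right_inv (hU _).1 ?_
  rw [hBinv, mul_assoc, ← mul_assoc (B u⁻¹), (hU u).2, one_mul, hs]

lemma negBasis_sub_mem_spanInvCountLT (hB : IsHeckeBasis c B)
    (hU : ∀ w, U w * B w⁻¹ = 1 ∧ B w⁻¹ * U w = 1) (w : Perm (Fin n)) :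
    U w - B w ∈ spanInvCountLT B (invCount w) := by
  induction hN : invCount w using Nat.strong_induction_on generalizing w with
  | _ N ih =>
  by_cases hw : w = 1
  · have hU1 : U 1 = 1 := by simpa [hB.one] using (hU 1).1
    simp [hw, hU1, hB.one]
  obtain ⟨i, j, hij, hdesc⟩ := exists_adj_descent hw
  set u := w * swap i j
  have hu : u i < u j := by simpa [u] using hdesc
  have hwu : u * swap i j = w := by simp [u, mul_assoc]
  have hlen : invCount u + 1 = N := hN ▸ invCount_mul_swap_of_gt hij hdesc
  have IH := ih _ (by omega) u rfl
  have hsplit : U u * (B (swap i j) - c • 1) - B u * B (swap i j) =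
      (U u - B u) * B (swap i j) - c • (U u - B u) - c • B u := by
    simp only [mul_sub, sub_mul, mul_smul_comm, mul_one, smul_sub]
    abel
  rw [← hwu, hB.negBasis_mul_swap_eq hU hij hu, hB.negBasis_swap_eq hU hij,
    ← hB.mul_swap_of_lt hij hu, hsplit]
  exact sub_mem (sub_mem (hlen ▸ hB.mul_swap_mem_spanInvCountLT hij IH)
    (Submodule.smul_mem _ _ (spanInvCountLT_mono (by omega) IH)))
    (Submodule.smul_mem _ _ (basis_mem_spanInvCountLT (by omega)))

lemma repr_negBasis_revPerm (hB : IsHeckeBasis c B)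
    (hU : ∀ w, U w * B w⁻¹ = 1 ∧ B w⁻¹ * U w = 1) (w : Perm (Fin n)) :
    B.repr (U w) Fin.revPerm = B.repr (B w) Fin.revPerm := by
  have h := hB.negBasis_sub_mem_spanInvCountLT hU w
  rw [spanInvCountLT, B.mem_span_image] at h
  have h0 : B.repr (U w - B w) Fin.revPerm = 0 := Finsupp.notMem_support_iff.1 fun hmem =>
    (h hmem).not_ge (invCount_le_invCount_revPerm w)
  rwa [map_sub, Finsupp.sub_apply, sub_eq_zero] at h0

end IsHeckeBasis

end Hecke

/-- (Kálmán's coefficient lemma.) Let `x ∈ Hₙ` be expanded in the positive basis as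
`x = Σ_w a_w T_w` and in the negative basis as `x = Σ_w b_w U_w`, where
`U_w = (T_{w⁻¹})⁻¹`. Then the coefficients of the longest element `δ` agree: `a_δ = b_δ`. -/
theorem kalman_coefficient_lemma (n : ℕ) (A : Type*) [Ring A] [Algebra R A]
    (B : Module.Basis (Equiv.Perm (Fin n)) R A)
    (h1 : B 1 = 1)
    (hmul : ∀ u v : Equiv.Perm (Fin n),
      invCount (u * v) = invCount u + invCount v → B (u * v) = B u * B v)
    (hquad : ∀ s : Equiv.Perm (Fin n), IsAdjSwap s → B s ^ 2 = z • B s + 1)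
    (U : Equiv.Perm (Fin n) → A)
    (hU : ∀ w : Equiv.Perm (Fin n), U w * B w⁻¹ = 1 ∧ B w⁻¹ * U w = 1)
    (x : A) (a b : Equiv.Perm (Fin n) → R)
    (ha : x = ∑ w : Equiv.Perm (Fin n), a w • B w)
    (hb : x = ∑ w : Equiv.Perm (Fin n), b w • U w) :
    a (Fin.revPerm : Equiv.Perm (Fin n)) = b (Fin.revPerm : Equiv.Perm (Fin n)) := by
  have hB : IsHeckeBasis z B := ⟨h1, hmul, hquad⟩
  calc a Fin.revPerm = B.repr x Fin.revPerm := by rw [ha, B.repr_sum_self]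
    _ = B.repr (∑ w, b w • B w) Fin.revPerm := by
      simp only [hb, map_sum, map_smul, Finsupp.coe_finsetSum, Finset.sum_apply,
        Finsupp.smul_apply, hB.repr_negBasis_revPerm hU]
    _ = b Fin.revPerm := by rw [B.repr_sum_self]
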